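/- arXiv:0812.0201 — 2 statements merged into one kernel-verified Lean document; each statement's English description precedes it below -/
import Mathlib

section
/- The Jacobi identity for theta functions holds: θ'(0,τ) = π·θ₁(0,τ)·θ₂(0,τ)·θ₃(0,τ), where θ'(0,τ) denotes the derivative of θ(v,τ) with respect to v evaluated at v = 0. -/
open Complex

/-- `qp τ s = e^{2πiτs}`, so that `qp τ s = q^s` with `q = e^{2πiτ}`. -/
noncomputable def qp (τ s : ℂ) : ℂ := Complex.exp (2 * (Real.pi : ℂ) * Complex.I * τ * s)

/-- Jacobi theta function θ(v,τ). -/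
noncomputable def jTheta (v τ : ℂ) : ℂ :=
  2 * qp τ (1/8) * Complex.sin ((Real.pi : ℂ) * v) *
    ∏' j : ℕ, ((1 - qp τ (j + 1)) *
      (1 - Complex.exp (2 * (Real.pi : ℂ) * Complex.I * v) * qp τ (j + 1)) *
      (1 - Complex.exp (-(2 * (Real.pi : ℂ) * Complex.I * v)) * qp τ (j + 1)))

/-- Jacobi theta function θ₁(v,τ). -/
noncomputable def jTheta1 (v τ : ℂ) : ℂ :=
  2 * qp τ (1/8) * Complex.cos ((Real.pi : ℂ) * v) *
    ∏' j : ℕ, ((1 - qp τ (j + 1)) *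
      (1 + Complex.exp (2 * (Real.pi : ℂ) * Complex.I * v) * qp τ (j + 1)) *
      (1 + Complex.exp (-(2 * (Real.pi : ℂ) * Complex.I * v)) * qp τ (j + 1)))

/-- Jacobi theta function θ₂(v,τ). -/
noncomputable def jTheta2 (v τ : ℂ) : ℂ :=
  ∏' j : ℕ, ((1 - qp τ (j + 1)) *
    (1 - Complex.exp (2 * (Real.pi : ℂ) * Complex.I * v) * qp τ ((j : ℂ) + 1/2)) *
    (1 - Complex.exp (-(2 * (Real.pi : ℂ) * Complex.I * v)) * qp τ ((j : ℂ) + 1/2)))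

/-- Jacobi theta function θ₃(v,τ). -/
noncomputable def jTheta3 (v τ : ℂ) : ℂ :=
  ∏' j : ℕ, ((1 - qp τ (j + 1)) *
    (1 + Complex.exp (2 * (Real.pi : ℂ) * Complex.I * v) * qp τ ((j : ℂ) + 1/2)) *
    (1 + Complex.exp (-(2 * (Real.pi : ℂ) * Complex.I * v)) * qp τ ((j : ℂ) + 1/2)))

/-!
Factor the sine out of `θ(v,τ) = sin(πv) · g(v)`. The three infinite products in `g` are
q-Pochhammer symbols `(a; q)_∞` evaluated at `a = q, e^{±2πiv} q`, and `a ↦ (a; q)_∞` is entire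
as a locally uniform limit of polynomials, so `θ'(0) = π g(0) = 2π q^{1/8} (q;q)³`. At `v = 0`,
with `r = q^{1/2}`, `θ₁ = 2q^{1/8}(q;q)(-q;q)²`, `θ₂ = (q;q)(r;q)²`, `θ₃ = (q;q)(-r;q)²`, and
`(r;q)(-r;q) = (q;q²)`, so the identity reduces to Euler's `(-q;q)_∞ (q;q²)_∞ = 1`.
-/

open Real

/-- The q-Pochhammer symbol `(a; q)_∞`. -/
noncomputable def qPochhammer (a q : ℂ) : ℂ := ∏' n : ℕ, (1 - a * q ^ n)

section qPochhammer

variable {q : ℂ}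

lemma summable_norm_mul_geometric (a : ℂ) (hq : ‖q‖ < 1) : Summable fun n : ℕ ↦ ‖a * q ^ n‖ := by
  simpa [norm_mul, norm_pow] using
    (summable_geometric_of_lt_one (norm_nonneg q) hq).mul_left ‖a‖

lemma multipliable_qPochhammer (a : ℂ) (hq : ‖q‖ < 1) :
    Multipliable fun n : ℕ ↦ 1 - a * q ^ n := by
  simpa [sub_eq_add_neg] using Complex.multipliable_one_add_of_summable
    (summable_norm_mul_geometric a hq).of_norm.neg

lemma qPochhammer_ne_zero {a : ℂ} (ha : ‖a‖ < 1) (hq : ‖q‖ < 1) : qPochhammer a q ≠ 0 := by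
  have hlt (n : ℕ) : ‖a * q ^ n‖ < 1 := by
    rw [norm_mul, norm_pow]
    exact (mul_le_of_le_one_right (norm_nonneg a) (pow_le_one₀ (norm_nonneg q) hq.le)).trans_lt ha
  simpa [qPochhammer, sub_eq_add_neg] using tprod_one_add_ne_zero_of_summable
    (f := fun n ↦ -(a * q ^ n))
    (fun n h ↦ (hlt n).ne (by rw [show a * q ^ n = 1 by linear_combination -h, norm_one]))
    (by simpa using summable_norm_mul_geometric a hq)

lemma differentiable_qPochhammer (hq : ‖q‖ < 1) : Differentiable ℂ (qPochhammer · q) := by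
  intro a
  set R := ‖a‖ + 1
  have hprod : HasProdLocallyUniformlyOn (fun n b ↦ 1 + -(b * q ^ n)) (qPochhammer · q)
      (Metric.ball 0 R) := by
    simp only [qPochhammer, sub_eq_add_neg]
    refine Summable.hasProdLocallyUniformlyOn_one_add Metric.isOpen_ball
      (summable_norm_mul_geometric R hq) (.of_forall fun n b hb ↦ ?_) fun n ↦ by fun_prop
    rw [norm_neg, norm_mul, norm_mul, Complex.norm_real, Real.norm_of_nonneg (by positivity)]
    gcongr
    simpa using (mem_ball_zero_iff.mp hb).le
  have hdiff := hprod.differentiableOn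
    (.of_forall fun s ↦ by simpa [Finset.prod_fn] using
      DifferentiableOn.finsetProd (fun _ _ ↦ by fun_prop)) Metric.isOpen_ball
  exact hdiff.differentiableAt (Metric.isOpen_ball.mem_nhds (by simp [R]))

lemma tprod_mul_mul_eq_qPochhammer (hq : ‖q‖ < 1) (a b c : ℂ) :
    ∏' n : ℕ, ((1 - a * q ^ n) * (1 - b * q ^ n) * (1 - c * q ^ n)) =
      qPochhammer a q * qPochhammer b q * qPochhammer c q := by
  have ha := multipliable_qPochhammer a hq
  have hb := multipliable_qPochhammer b hq
  have hc := multipliable_qPochhammer c hq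
  rw [(ha.mul hb).tprod_mul hc, ha.tprod_mul hb]
  rfl

lemma qPochhammer_mul_qPochhammer_neg (a : ℂ) (hq : ‖q‖ < 1) :
    qPochhammer a q * qPochhammer (-a) q = qPochhammer (a ^ 2) (q ^ 2) := by
  rw [qPochhammer, qPochhammer, ← (multipliable_qPochhammer a hq).tprod_mul
    (multipliable_qPochhammer (-a) hq)]
  exact tprod_congr fun n ↦ by ring

lemma qPochhammer_eq_even_mul_odd (a : ℂ) (hq : ‖q‖ < 1) :
    qPochhammer a q = qPochhammer a (q ^ 2) * qPochhammer (a * q) (q ^ 2) := by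
  have hq2 : ‖q ^ 2‖ < 1 := by simpa [norm_pow] using pow_lt_one₀ (norm_nonneg q) hq two_ne_zero
  have heven (k : ℕ) : 1 - a * q ^ (2 * k) = 1 - a * (q ^ 2) ^ k := by ring
  have hodd (k : ℕ) : 1 - a * q ^ (2 * k + 1) = 1 - a * q * (q ^ 2) ^ k := by ring
  rw [qPochhammer, ← tprod_even_mul_odd (f := fun n ↦ 1 - a * q ^ n)]
  · simp only [heven, hodd]; rfl
  · simpa only [heven] using multipliable_qPochhammer a hq2
  · simpa only [hodd] using multipliable_qPochhammer (a * q) hq2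

/-- Euler: `(q;q)(-q;q) = (q²;q²)` and `(q;q) = (q;q²)(q²;q²)`; cancel `(q²;q²)`. -/
theorem qPochhammer_neg_self_mul_qPochhammer_sq (hq : ‖q‖ < 1) :
    qPochhammer (-q) q * qPochhammer q (q ^ 2) = 1 := by
  have hq2 : ‖q ^ 2‖ < 1 := by simpa [norm_pow] using pow_lt_one₀ (norm_nonneg q) hq two_ne_zero
  have h := qPochhammer_mul_qPochhammer_neg q hq
  rw [qPochhammer_eq_even_mul_odd q hq, ← sq] at h
  refine mul_left_cancel₀ (qPochhammer_ne_zero hq2 hq2) ?_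
  linear_combination h

end qPochhammer

lemma qp_natCast_add (τ s : ℂ) (j : ℕ) : qp τ (j + s) = qp τ s * qp τ 1 ^ j := by
  simp only [qp, ← Complex.exp_nat_mul, ← Complex.exp_add]
  ring_nf

lemma qp_one_eq_sq (τ : ℂ) : qp τ 1 = qp τ (1 / 2) ^ 2 := by
  simp only [qp, ← Complex.exp_nat_mul, Nat.cast_ofNat]
  ring_nf

lemma norm_qp_one_lt_one {τ : ℂ} (hτ : 0 < τ.im) : ‖qp τ 1‖ < 1 := by
  rw [qp, Complex.norm_exp, Real.exp_lt_one_iff]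
  simpa using mul_pos Real.two_pi_pos hτ

lemma jTheta_eq_sin_mul_qPochhammer {τ : ℂ} (hτ : 0 < τ.im) (v : ℂ) :
    jTheta v τ = 2 * qp τ (1 / 8) * Complex.sin (π * v) *
      (qPochhammer (qp τ 1) (qp τ 1) *
        qPochhammer (cexp (2 * π * I * v) * qp τ 1) (qp τ 1) *
        qPochhammer (cexp (-(2 * π * I * v)) * qp τ 1) (qp τ 1)) := by
  rw [jTheta, ← tprod_mul_mul_eq_qPochhammer (norm_qp_one_lt_one hτ)]
  congr 1
  exact tprod_congr fun j ↦ by rw [qp_natCast_add]; ring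

lemma jTheta1_zero {τ : ℂ} (hτ : 0 < τ.im) :
    jTheta1 0 τ = 2 * qp τ (1 / 8) *
      (qPochhammer (qp τ 1) (qp τ 1) * qPochhammer (-qp τ 1) (qp τ 1) *
        qPochhammer (-qp τ 1) (qp τ 1)) := by
  rw [jTheta1, ← tprod_mul_mul_eq_qPochhammer (norm_qp_one_lt_one hτ)]
  simp only [mul_zero, neg_zero, Complex.exp_zero, Complex.cos_zero, one_mul, mul_one]
  congr 1
  exact tprod_congr fun j ↦ by rw [qp_natCast_add]; ring

lemma jTheta2_zero {τ : ℂ} (hτ : 0 < τ.im) :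
    jTheta2 0 τ = qPochhammer (qp τ 1) (qp τ 1) * qPochhammer (qp τ (1 / 2)) (qp τ 1) *
      qPochhammer (qp τ (1 / 2)) (qp τ 1) := by
  rw [jTheta2, ← tprod_mul_mul_eq_qPochhammer (norm_qp_one_lt_one hτ)]
  simp only [mul_zero, neg_zero, Complex.exp_zero, one_mul]
  exact tprod_congr fun j ↦ by rw [qp_natCast_add, qp_natCast_add]

lemma jTheta3_zero {τ : ℂ} (hτ : 0 < τ.im) :
    jTheta3 0 τ = qPochhammer (qp τ 1) (qp τ 1) * qPochhammer (-qp τ (1 / 2)) (qp τ 1) *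
      qPochhammer (-qp τ (1 / 2)) (qp τ 1) := by
  rw [jTheta3, ← tprod_mul_mul_eq_qPochhammer (norm_qp_one_lt_one hτ)]
  simp only [mul_zero, neg_zero, Complex.exp_zero, one_mul]
  exact tprod_congr fun j ↦ by rw [qp_natCast_add, qp_natCast_add]; ring

/-- Jacobi identity: θ'(0,τ) = π θ₁(0,τ) θ₂(0,τ) θ₃(0,τ). -/
theorem jacobi_identity (τ : ℂ) (hτ : 0 < τ.im) :
    deriv (fun v => jTheta v τ) 0 =
      (Real.pi : ℂ) * jTheta1 0 τ * jTheta2 0 τ * jTheta3 0 τ := by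
  have hq := norm_qp_one_lt_one hτ
  have hP := differentiable_qPochhammer hq
  have hsin : HasDerivAt (fun v : ℂ ↦ 2 * qp τ (1 / 8) * Complex.sin (π * v))
      (2 * qp τ (1 / 8) * π) 0 := by
    simpa using (((hasDerivAt_id (0 : ℂ)).const_mul (π : ℂ)).csin).const_mul (2 * qp τ (1 / 8))
  rw [funext (jTheta_eq_sin_mul_qPochhammer hτ),
    deriv_fun_mul hsin.differentiableAt (by fun_prop), hsin.deriv,
    jTheta1_zero hτ, jTheta2_zero hτ, jTheta3_zero hτ]
  have hsplit := qPochhammer_mul_qPochhammer_neg (qp τ (1 / 2)) hq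
  rw [← qp_one_eq_sq] at hsplit
  have heuler := qPochhammer_neg_self_mul_qPochhammer_sq hq
  simp only [mul_zero, neg_zero, Complex.exp_zero, Complex.sin_zero, one_mul, zero_mul, add_zero]
  set P := qPochhammer (qp τ 1) (qp τ 1)
  set X := qPochhammer (-qp τ 1) (qp τ 1)
  set Y := qPochhammer (qp τ (1 / 2)) (qp τ 1)
  set Z := qPochhammer (-qp τ (1 / 2)) (qp τ 1)
  set W := qPochhammer (qp τ 1) (qp τ 1 ^ 2)
  linear_combination (-2 * qp τ (1 / 8) * π * P ^ 3) *
    (X ^ 2 * (Y * Z + W) * hsplit + (X * W + 1) * heuler)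
end

section
/- The group Γ₀(2) of matrices in SL₂(ℤ) with lower-left entry even is generated by T = [[1,1],[0,1]] and ST²ST, where S = [[0,-1],[1,0]]. -/
/-!
Put `L = S T⁻² S⁻¹ = [[1, 0], [2, 1]]`. Since `T · S T² S T = L` and `(S T² S T)² = -1`, it is
enough to see that every subgroup containing `T`, `L` and `-1` contains Γ₀(2). For
`A = [[a, b], [c, d]]` with `c` even the determinant forces `a` to be odd, hence nonzero.
Left multiplication by a power of `T` replaces `a` by some `a' = a + n c` with `2 |a'| ≤ |c|`,
and then left multiplication by a power of `L` replaces `c` by some `c' = c + 2 m a'` with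
`|c'| ≤ |a'|`. So `|c|` strictly decreases until `c = 0`, where `A = ± T ^ b`.
-/

open ModularGroup MatrixGroups CongruenceSubgroup

theorem Int.exists_two_mul_abs_add_mul_le (x : ℤ) {d : ℤ} (hd : d ≠ 0) :
    ∃ k : ℤ, 2 * |x + k * d| ≤ |d| := by
  have hm : 0 < d.natAbs := Int.natAbs_pos.mpr hd
  obtain ⟨k, hk⟩ := Int.natAbs_dvd.mp (Int.dvd_bmod_sub_self (x := x) (m := d.natAbs))
  refine ⟨k, ?_⟩
  rw [show x + k * d = x.bmod d.natAbs by linear_combination -hk]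
  have h₁ := Int.le_bmod (x := x) hm
  have h₂ := Int.bmod_le (x := x) hm
  rw [Int.abs_eq_natAbs, Int.abs_eq_natAbs]
  omega

namespace ModularGroup

theorem T_zpow_mul_apply_zero_zero (n : ℤ) (A : SL(2, ℤ)) :
    (T ^ n * A) 0 0 = A 0 0 + n * A 1 0 := by
  simp [coe_T_zpow, Matrix.mul_apply, Fin.sum_univ_two]

theorem S_mul_T_zpow_mul_S_inv_mul_apply_one_zero (n : ℤ) (A : SL(2, ℤ)) :
    (S * T ^ n * S⁻¹ * A) 1 0 = A 1 0 - n * A 0 0 := by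
  simp [coe_T_zpow, S_inv, Matrix.vecMul, dotProduct, Fin.sum_univ_two]
  ring

theorem T_mul_S_mul_T_sq_mul_S_mul_T : T * (S * T ^ 2 * S * T) = S * T ^ (-2 : ℤ) * S⁻¹ := by
  decide

theorem S_mul_T_sq_mul_S_mul_T_sq : (S * T ^ 2 * S * T) ^ 2 = -1 := by
  decide

theorem odd_apply_zero_zero_of_two_dvd {A : SL(2, ℤ)} (h : 2 ∣ A 1 0) : Odd (A 0 0) := by
  obtain ⟨k, hk⟩ := h
  have hdet : A 0 0 * A 1 1 - A 0 1 * A 1 0 = 1 := by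
    rw [← Matrix.det_fin_two]
    exact A.det_coe
  have : Odd (A 0 0 * A 1 1) := ⟨A 0 1 * k, by linear_combination hdet + A 0 1 * hk⟩
  exact (Int.odd_mul.mp this).1

theorem mem_of_apply_one_zero_eq_zero {H : Subgroup SL(2, ℤ)} (hT : T ∈ H) (hneg : -1 ∈ H)
    {A : SL(2, ℤ)} (hc : A 1 0 = 0) : A ∈ H := by
  have hdet : A 0 0 * A 1 1 = 1 := by
    have := A.det_coe
    rwa [Matrix.det_fin_two, hc, mul_zero, sub_zero] at this
  rcases Int.eq_one_or_neg_one_of_mul_eq_one' hdet with ⟨ha, hd⟩ | ⟨ha, hd⟩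
  · have : A = T ^ A 0 1 := by
      ext i j; fin_cases i <;> fin_cases j <;> simp [ha, hc, hd, coe_T_zpow]
    exact this ▸ zpow_mem hT _
  · have : A = -1 * T ^ (-A 0 1) := by
      ext i j; fin_cases i <;> fin_cases j <;> simp [ha, hc, hd, coe_T_zpow]
    exact this ▸ mul_mem hneg (zpow_mem hT _)

theorem mem_of_two_dvd_apply_one_zero {H : Subgroup SL(2, ℤ)} (hT : T ∈ H)
    (hL : S * T ^ (-2 : ℤ) * S⁻¹ ∈ H) (hneg : -1 ∈ H) (A : SL(2, ℤ)) (hA : 2 ∣ A 1 0) :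
    A ∈ H := by
  by_cases hc : A 1 0 = 0
  · exact mem_of_apply_one_zero_eq_zero hT hneg hc
  obtain ⟨n, hn⟩ := Int.exists_two_mul_abs_add_mul_le (A 0 0) hc
  have hc₁ : (T ^ n * A) 1 0 = A 1 0 := congrFun (T_pow_mul_apply_one n A) 0
  have ha₁ : (T ^ n * A) 0 0 ≠ 0 := by
    have := Int.odd_iff.mp (odd_apply_zero_zero_of_two_dvd (hc₁ ▸ hA))
    omega
  obtain ⟨m, hm⟩ := Int.exists_two_mul_abs_add_mul_le (A 1 0) (mul_ne_zero two_ne_zero ha₁)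
  have hc₂ : ((S * T ^ (-2 : ℤ) * S⁻¹) ^ m * (T ^ n * A)) 1 0 =
      A 1 0 + m * (2 * (T ^ n * A) 0 0) := by
    rw [conj_zpow, ← zpow_mul, S_mul_T_zpow_mul_S_inv_mul_apply_one_zero, hc₁]
    ring
  have hA₂ := mem_of_two_dvd_apply_one_zero hT hL hneg
    ((S * T ^ (-2 : ℤ) * S⁻¹) ^ m * (T ^ n * A))
    (hc₂ ▸ dvd_add hA (dvd_mul_of_dvd_right (dvd_mul_right 2 _) _))
  rwa [Subgroup.mul_mem_cancel_left H (zpow_mem hL m),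
    Subgroup.mul_mem_cancel_left H (zpow_mem hT n)] at hA₂
termination_by (A 1 0).natAbs
decreasing_by
  rw [hc₂]
  rw [← T_zpow_mul_apply_zero_zero] at hn
  simp only [Int.abs_eq_natAbs] at *
  omega

end ModularGroup

/-- Γ₀(2) is generated by T and S·T²·S·T. -/
theorem Gamma0_two_generators :
    CongruenceSubgroup.Gamma0 2 =
      Subgroup.closure {ModularGroup.T, ModularGroup.S * ModularGroup.T ^ 2 * ModularGroup.S * ModularGroup.T} := by
  have hT : T ∈ Subgroup.closure {T, S * T ^ 2 * S * T} :=
    Subgroup.subset_closure (Set.mem_insert _ _)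
  have hg : S * T ^ 2 * S * T ∈ Subgroup.closure {T, S * T ^ 2 * S * T} :=
    Subgroup.subset_closure (Set.mem_insert_of_mem _ rfl)
  refine le_antisymm (fun A hA ↦ ?_) ((Subgroup.closure_le _).mpr ?_)
  · exact mem_of_two_dvd_apply_one_zero hT
      (T_mul_S_mul_T_sq_mul_S_mul_T ▸ mul_mem hT hg)
      (S_mul_T_sq_mul_S_mul_T_sq ▸ pow_mem hg 2) A
      ((ZMod.intCast_zmod_eq_zero_iff_dvd _ 2).mp (Gamma0_mem.mp hA))
  · rintro _ (rfl | rfl) <;> exact Gamma0_mem.mpr rfl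
end
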